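/- arXiv:2308.15442 — 5 statements merged into one kernel-verified Lean document; each statement's English description precedes it below -/
import Mathlib

section
/- Let H₀ and H₁ be N×N Hermitian positive-semidefinite complex matrices, let ψ₀ ∈ ℂ^N be a unit vector with H₀ψ₀ = 0 (a ground state of H₀ with zero ground-state energy), let p ≥ 1, let β, γ : Fin p → ℝ, and let ψ_p be the QAOA state after p rounds. Then (Σ_{j=1}^{p} (|β_j| + |γ_j|)) · ‖H₁H₀ − H₀H₁‖ ≥ ⟨ψ_p, H₀ψ_p⟩ + ⟨ψ₀, H₁ψ₀⟩ − ⟨ψ_p, H₁ψ_p⟩. -/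
open Matrix Complex
open scoped ComplexOrder

/-- The spectral norm (ℓ²→ℓ² operator norm) of a matrix. -/
noncomputable def specNorm {ι : Type*} [Fintype ι] [DecidableEq ι] {𝕜 : Type*} [RCLike 𝕜]
    (M : Matrix ι ι 𝕜) : ℝ :=
  ‖Matrix.toEuclideanCLM (𝕜 := 𝕜) M‖

/-- The QAOA state after `p` rounds:
`ψ_p = exp(-i β_p H₀) exp(-i γ_p H₁) ⋯ exp(-i β_1 H₀) exp(-i γ_1 H₁) ψ₀`. -/
noncomputable def qaoaState {ι : Type*} [Fintype ι] [DecidableEq ι]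
    (H0 H1 : Matrix ι ι ℂ) (p : ℕ) (β γ : Fin p → ℝ) (ψ0 : ι → ℂ) : ι → ℂ :=
  (List.ofFn (fun j : Fin p =>
      NormedSpace.exp ((-(β j.rev : ℂ) * Complex.I) • H0) *
      NormedSpace.exp ((-(γ j.rev : ℂ) * Complex.I) • H1))).prod.mulVec ψ0

/-! Put `A = H₀ - H₁` and let `U` be the QAOA unitary, so `ψ_p = U ψ₀`. Since `H₀ψ₀ = 0`, the
right-hand side is `Re ⟨ψ₀, (U⋆AU - A)ψ₀⟩ ≤ ‖U⋆AU - A‖`. The defect `‖U⋆AU - A‖` is subadditive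
along products of unitaries, and for a single factor `e^{-itH}` it is at most `|t| ‖HA - AH‖`,
by the mean value theorem applied to `s ↦ e^{isH} A e^{-isH}`, whose derivative is a unitary
conjugate of `i(HA - AH)`. Finally `H₀A - AH₀ = H₁A - AH₁ = H₁H₀ - H₀H₁`. -/

open NormedSpace

section CStarRing

variable {E : Type*} [NormedRing E] [StarRing E] [CStarRing E]

theorem norm_star_mul_mul_mul_sub_le (a u : E) {v : E} (hv : v ∈ unitary E) :
    ‖star (u * v) * a * (u * v) - a‖ ≤ ‖star u * a * u - a‖ + ‖star v * a * v - a‖ := by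
  have hsplit : star (u * v) * a * (u * v) - a
      = star v * (star u * a * u - a) * v + (star v * a * v - a) := by
    rw [star_mul]
    noncomm_ring
  rw [hsplit]
  refine (norm_add_le _ _).trans_eq ?_
  rw [CStarRing.norm_mul_mem_unitary _ hv, CStarRing.norm_mem_unitary_mul _ (Unitary.star_mem hv)]

theorem norm_star_prod_ofFn_mul_mul_sub_le (a : E) :
    ∀ {p : ℕ} (f : Fin p → E), (∀ j, f j ∈ unitary E) →
      ‖star (List.ofFn f).prod * a * (List.ofFn f).prod - a‖ ≤ ∑ j, ‖star (f j) * a * f j - a‖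
  | 0, _, _ => by simp
  | p + 1, f, hf => by
    rw [List.ofFn_succ, List.prod_cons, Fin.sum_univ_succ]
    have htail : (List.ofFn fun j : Fin p => f j.succ).prod ∈ unitary E :=
      Submonoid.list_prod_mem _ (by simpa using fun j : Fin p => hf j.succ)
    exact (norm_star_mul_mul_mul_sub_le a _ htail).trans
      (add_le_add le_rfl (norm_star_prod_ofFn_mul_mul_sub_le a _ fun j => hf j.succ))

end CStarRing

section CStarAlgebra

variable {A : Type*} [CStarAlgebra A]

theorem exp_real_smul_mem_unitary {c : A} (hc : c ∈ skewAdjoint A) (s : ℝ) :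
    exp (s • c) ∈ unitary A :=
  letI : NormedAlgebra ℚ A := .restrictScalars ℚ ℂ A
  exp_mem_unitary_of_mem_skewAdjoint (skewAdjoint.smul_mem s hc)

theorem hasDerivAt_exp_smul_mul_mul_exp_smul_neg (b c : A) (s : ℝ) :
    HasDerivAt (fun s : ℝ => exp (s • c) * b * exp (s • -c))
      (exp (s • c) * (c * b - b * c) * exp (s • -c)) s := by
  refine (((hasDerivAt_exp_smul_const c s).mul_const b).mul
    (hasDerivAt_exp_smul_const' (-c) s)).congr_deriv ?_
  noncomm_ring

theorem norm_exp_smul_mul_mul_exp_smul_neg_sub_le {c : A} (hc : c ∈ skewAdjoint A) (b : A)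
    (t : ℝ) : ‖exp (t • c) * b * exp (t • -c) - b‖ ≤ |t| * ‖c * b - b * c‖ := by
  have hderiv_le : ∀ s : ℝ, ‖exp (s • c) * (c * b - b * c) * exp (s • -c)‖ ≤ ‖c * b - b * c‖ :=
    fun s => by
      rw [CStarRing.norm_mul_mem_unitary _ (exp_real_smul_mem_unitary (neg_mem hc) s),
        CStarRing.norm_mem_unitary_mul _ (exp_real_smul_mem_unitary hc s)]
  have := Convex.norm_image_sub_le_of_norm_hasDerivWithin_le
    (fun s _ => (hasDerivAt_exp_smul_mul_mul_exp_smul_neg b c s).hasDerivWithinAt)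
    (fun s _ => hderiv_le s) convex_univ (Set.mem_univ 0) (Set.mem_univ t)
  simpa [mul_comm |t|] using this

theorem IsSelfAdjoint.norm_star_exp_mul_mul_exp_sub_le {h : A} (hh : IsSelfAdjoint h) (b : A)
    (t : ℝ) :
    ‖star (NormedSpace.exp ((-(t : ℂ) * Complex.I) • h)) * b *
        NormedSpace.exp ((-(t : ℂ) * Complex.I) • h) - b‖ ≤
      |t| * ‖h * b - b * h‖ := by
  have hc : Complex.I • h ∈ skewAdjoint A := hh.I_smul_mem_skewAdjoint
  have hexp : (-(t : ℂ) * Complex.I) • h = t • -(Complex.I • h) := by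
    rw [← Complex.coe_smul, mul_smul, neg_smul, smul_neg]
  have hstar : star (NormedSpace.exp ((-(t : ℂ) * Complex.I) • h)) =
      NormedSpace.exp (t • (Complex.I • h)) := by
    rw [star_exp, hexp, star_smul, star_trivial, skewAdjoint.mem_iff.mp (neg_mem hc), neg_neg]
  rw [hstar, hexp]
  refine (norm_exp_smul_mul_mul_exp_smul_neg_sub_le hc b t).trans_eq ?_
  rw [smul_mul_assoc, mul_smul_comm, ← smul_sub, norm_smul, Complex.norm_I, one_mul]

end CStarAlgebra

section QAOAUnitary

variable {A : Type*} [Ring A] [Algebra ℂ A] [TopologicalSpace A] [IsTopologicalRing A]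

noncomputable def qaoaLayer (H0 H1 : A) (β γ : ℝ) : A :=
  exp ((-(β : ℂ) * Complex.I) • H0) * exp ((-(γ : ℂ) * Complex.I) • H1)

noncomputable def qaoaUnitary (H0 H1 : A) (p : ℕ) (β γ : Fin p → ℝ) : A :=
  (List.ofFn fun j : Fin p => qaoaLayer H0 H1 (β j.rev) (γ j.rev)).prod

end QAOAUnitary

section QAOABound

variable {A : Type*} [CStarAlgebra A] {H0 H1 : A}

theorem IsSelfAdjoint.exp_neg_ofReal_mul_I_smul_mem_unitary {h : A} (hh : IsSelfAdjoint h)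
    (t : ℝ) :
    NormedSpace.exp ((-(t : ℂ) * Complex.I) • h) ∈ unitary A :=
  letI : NormedAlgebra ℚ A := .restrictScalars ℚ ℂ A
  exp_mem_unitary_of_mem_skewAdjoint (hh.smul_mem_skewAdjoint (by simp [skewAdjoint.mem_iff]))

theorem norm_conj_qaoaLayer_sub_le (hH0 : IsSelfAdjoint H0) (hH1 : IsSelfAdjoint H1) (β γ : ℝ) :
    ‖star (qaoaLayer H0 H1 β γ) * (H0 - H1) * qaoaLayer H0 H1 β γ - (H0 - H1)‖ ≤
      (|β| + |γ|) * ‖H1 * H0 - H0 * H1‖ := by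
  have hcomm0 : H0 * (H0 - H1) - (H0 - H1) * H0 = H1 * H0 - H0 * H1 := by noncomm_ring
  have hcomm1 : H1 * (H0 - H1) - (H0 - H1) * H1 = H1 * H0 - H0 * H1 := by noncomm_ring
  have h0 := hH0.norm_star_exp_mul_mul_exp_sub_le (H0 - H1) β
  have h1 := hH1.norm_star_exp_mul_mul_exp_sub_le (H0 - H1) γ
  rw [hcomm0] at h0
  rw [hcomm1] at h1
  refine (norm_star_mul_mul_mul_sub_le _ _ (hH1.exp_neg_ofReal_mul_I_smul_mem_unitary γ)).trans ?_
  rw [add_mul]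
  exact add_le_add h0 h1

theorem norm_conj_qaoaUnitary_sub_le (hH0 : IsSelfAdjoint H0) (hH1 : IsSelfAdjoint H1) {p : ℕ}
    (β γ : Fin p → ℝ) :
    ‖star (qaoaUnitary H0 H1 p β γ) * (H0 - H1) * qaoaUnitary H0 H1 p β γ - (H0 - H1)‖ ≤
      (∑ j, (|β j| + |γ j|)) * ‖H1 * H0 - H0 * H1‖ := by
  refine (norm_star_prod_ofFn_mul_mul_sub_le _ _ fun j =>
    mul_mem (hH0.exp_neg_ofReal_mul_I_smul_mem_unitary _)
      (hH1.exp_neg_ofReal_mul_I_smul_mem_unitary _)).trans ?_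
  calc _ ≤ ∑ j : Fin p, (|β j.rev| + |γ j.rev|) * ‖H1 * H0 - H0 * H1‖ :=
        Finset.sum_le_sum fun j _ => norm_conj_qaoaLayer_sub_le hH0 hH1 _ _
    _ = (∑ j, (|β j| + |γ j|)) * ‖H1 * H0 - H0 * H1‖ := by
        rw [← Finset.sum_mul, ← Equiv.sum_comp Fin.revPerm fun j => |β j| + |γ j|]
        rfl

end QAOABound

theorem star_mulVec_dotProduct_mulVec_mulVec {ι R : Type*} [Fintype ι] [CommSemiring R]
    [StarRing R] (U M : Matrix ι ι R) (ψ : ι → R) :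
    star (U *ᵥ ψ) ⬝ᵥ (M *ᵥ (U *ᵥ ψ)) = star ψ ⬝ᵥ ((star U * M * U) *ᵥ ψ) := by
  rw [Matrix.star_mulVec, Matrix.mulVec_mulVec, ← Matrix.dotProduct_mulVec,
    Matrix.mulVec_mulVec, Matrix.star_eq_conjTranspose, ← Matrix.mul_assoc]

section Matrix

open scoped Matrix.Norms.L2Operator

variable {ι : Type*} [Fintype ι] [DecidableEq ι]

theorem re_star_dotProduct_mulVec_le_specNorm (M : Matrix ι ι ℂ) {ψ : ι → ℂ}
    (hψ : star ψ ⬝ᵥ ψ = 1) : (star ψ ⬝ᵥ (M *ᵥ ψ)).re ≤ specNorm M := by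
  set x : EuclideanSpace ℂ ι := WithLp.toLp 2 ψ
  have hx : ‖x‖ = 1 := by
    rw [← pow_eq_one_iff_of_nonneg (norm_nonneg _) two_ne_zero, ← inner_self_eq_norm_sq (𝕜 := ℂ),
      EuclideanSpace.inner_toLp_toLp, dotProduct_comm, hψ, RCLike.one_re]
  calc (star ψ ⬝ᵥ (M *ᵥ ψ)).re
      ≤ ‖star ψ ⬝ᵥ (M *ᵥ ψ)‖ := Complex.re_le_norm _
    _ = ‖inner ℂ x (WithLp.toLp 2 (M *ᵥ ψ))‖ := by
        rw [EuclideanSpace.inner_toLp_toLp, dotProduct_comm]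
    _ ≤ ‖x‖ * (‖M‖ * ‖x‖) := (norm_inner_le_norm _ _).trans
        (mul_le_mul_of_nonneg_left (M.l2_opNorm_mulVec x) (norm_nonneg _))
    _ = specNorm M := by rw [hx, one_mul, mul_one]; rfl

theorem specNorm_conj_qaoaUnitary_sub_le {H0 H1 : Matrix ι ι ℂ} (hH0 : H0.IsHermitian)
    (hH1 : H1.IsHermitian) {p : ℕ} (β γ : Fin p → ℝ) :
    specNorm (star (qaoaUnitary H0 H1 p β γ) * (H0 - H1) * qaoaUnitary H0 H1 p β γ - (H0 - H1)) ≤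
      (∑ j, (|β j| + |γ j|)) * specNorm (H1 * H0 - H0 * H1) :=
  norm_conj_qaoaUnitary_sub_le hH0 hH1 β γ

end Matrix

theorem qaoa_angle_sum_lower_bound_general
    {N : ℕ} (H0 H1 : Matrix (Fin N) (Fin N) ℂ)
    (hH0 : H0.PosSemidef) (hH1 : H1.PosSemidef)
    (ψ0 : Fin N → ℂ) (hψ0 : star ψ0 ⬝ᵥ ψ0 = 1) (hground : H0 *ᵥ ψ0 = 0)
    (p : ℕ) (β γ : Fin p → ℝ)
    (ψp : Fin N → ℂ) (hψp : ψp = qaoaState H0 H1 p β γ ψ0) :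
    (∑ j, (|β j| + |γ j|)) * specNorm (H1 * H0 - H0 * H1) ≥
      (star ψp ⬝ᵥ (H0 *ᵥ ψp)).re + (star ψ0 ⬝ᵥ (H1 *ᵥ ψ0)).re
        - (star ψp ⬝ᵥ (H1 *ᵥ ψp)).re := by
  set U := qaoaUnitary H0 H1 p β γ
  have hψpU : ψp = U *ᵥ ψ0 := hψp
  have henergy : (star ψp ⬝ᵥ (H0 *ᵥ ψp)).re + (star ψ0 ⬝ᵥ (H1 *ᵥ ψ0)).re
      - (star ψp ⬝ᵥ (H1 *ᵥ ψp)).re =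
      (star ψ0 ⬝ᵥ ((star U * (H0 - H1) * U - (H0 - H1)) *ᵥ ψ0)).re := by
    simp only [hψpU, star_mulVec_dotProduct_mulVec_mulVec, mul_sub, sub_mul, sub_mulVec,
      dotProduct_sub, hground, dotProduct_zero, Complex.sub_re, Complex.zero_re]
    ring
  rw [ge_iff_le, henergy]
  exact (re_star_dotProduct_mulVec_le_specNorm _ hψ0).trans
    (specNorm_conj_qaoaUnitary_sub_le hH0.isHermitian hH1.isHermitian β γ)

/-- lower bound on the sum of QAOA angles. -/
theorem qaoa_angle_sum_lower_bound
    {N : ℕ} (hN : 1 ≤ N) (H0 H1 : Matrix (Fin N) (Fin N) ℂ)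
    (hH0 : H0.PosSemidef) (hH1 : H1.PosSemidef)
    (ψ0 : Fin N → ℂ) (hψ0 : star ψ0 ⬝ᵥ ψ0 = 1) (hground : H0 *ᵥ ψ0 = 0)
    (p : ℕ) (hp : 1 ≤ p) (β γ : Fin p → ℝ)
    (ψp : Fin N → ℂ) (hψp : ψp = qaoaState H0 H1 p β γ ψ0) :
    (∑ j, (|β j| + |γ j|)) * specNorm (H1 * H0 - H0 * H1) ≥
      (star ψp ⬝ᵥ (H0 *ᵥ ψp)).re + (star ψ0 ⬝ᵥ (H1 *ᵥ ψ0)).re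
        - (star ψp ⬝ᵥ (H1 *ᵥ ψp)).re :=
  qaoa_angle_sum_lower_bound_general H0 H1 hH0 hH1 ψ0 hψ0 hground p β γ ψp hψp
end

section
/- Let N ≥ 1, let C : Fin N → ℝ, let H_C be the N×N diagonal matrix with diagonal entries C(i), and let P be the N×N matrix all of whose entries equal 1/N (the orthogonal projector onto the uniform vector). Then ‖H_C P − P H_C‖ = σ_C, where σ_C = √((1/N) Σ_i C(i)² − ((1/N) Σ_i C(i))²) is the population standard deviation of the values C(i). -/
/-!
The commutator acts by `x ↦ (⟪𝟙, x⟫ C - ⟪C, x⟫ 𝟙) / N`, where `𝟙` is the all-ones vector: it is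
`1 / N` times the operator `x ↦ ⟪b, x⟫ a - ⟪a, x⟫ b` for `a = C`, `b = 𝟙`. Replacing `a` by
`a - t b` does not change that operator, so we may take `a ⊥ b`; then Bessel's inequality bounds
its norm by `‖a‖ ‖b‖`, and `x = b` attains the bound. In general its norm is therefore the area
`√(‖a‖² ‖b‖² - ⟪a, b⟫²)` of the parallelogram spanned by `a` and `b`, which for `a = C`, `b = 𝟙`
is `√(N ∑ C² - (∑ C)²)`, i.e. `N` times the standard deviation.
-/

open Matrix

open RealInnerProductSpace

section Wedge

variable {E : Type*} [NormedAddCommGroup E] [InnerProductSpace ℝ E]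

noncomputable def wedgeCLM (a b : E) : E →L[ℝ] E :=
  (innerSL ℝ b).smulRight a - (innerSL ℝ a).smulRight b

@[simp]
theorem wedgeCLM_apply (a b x : E) : wedgeCLM a b x = ⟪b, x⟫ • a - ⟪a, x⟫ • b := by
  simp [wedgeCLM]

theorem wedgeCLM_sub_smul_left (a b : E) (t : ℝ) : wedgeCLM (a - t • b) b = wedgeCLM a b := by
  ext x
  simp only [wedgeCLM_apply, inner_sub_left, real_inner_smul_left]
  module

theorem norm_wedgeCLM_apply_sq {a b : E} (hab : ⟪a, b⟫ = 0) (x : E) :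
    ‖wedgeCLM a b x‖ ^ 2 = ‖a‖ ^ 2 * ⟪b, x⟫ ^ 2 + ‖b‖ ^ 2 * ⟪a, x⟫ ^ 2 := by
  rw [wedgeCLM_apply, ← real_inner_self_eq_norm_sq, ← real_inner_self_eq_norm_sq,
    ← real_inner_self_eq_norm_sq]
  simp only [inner_sub_left, inner_sub_right, real_inner_smul_left, real_inner_smul_right,
    real_inner_comm a b, hab]
  ring

/-- Bessel's inequality for two orthogonal vectors, cleared of denominators. -/
theorem inner_sq_add_inner_sq_le {a b : E} (hab : ⟪a, b⟫ = 0) (x : E) :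
    ‖a‖ ^ 2 * ⟪b, x⟫ ^ 2 + ‖b‖ ^ 2 * ⟪a, x⟫ ^ 2 ≤ ‖a‖ ^ 2 * ‖b‖ ^ 2 * ‖x‖ ^ 2 := by
  rcases eq_or_ne a 0 with rfl | ha
  · simp
  -- Cauchy–Schwarz for `b` and the component of `‖a‖² x` orthogonal to `a`
  set y := ‖a‖ ^ 2 • x - ⟪a, x⟫ • a
  have hby : ⟪b, y⟫ = ‖a‖ ^ 2 * ⟪b, x⟫ := by
    simp [y, inner_sub_right, real_inner_smul_right, real_inner_comm a b, hab]
  have hy : ‖y‖ ^ 2 = ‖a‖ ^ 2 * (‖a‖ ^ 2 * ‖x‖ ^ 2 - ⟪a, x⟫ ^ 2) := by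
    rw [← real_inner_self_eq_norm_sq]
    simp only [y, inner_sub_left, inner_sub_right, real_inner_smul_left, real_inner_smul_right]
    rw [real_inner_self_eq_norm_sq, real_inner_self_eq_norm_sq, real_inner_comm a x]
    ring
  have hCS := real_inner_mul_inner_self_le b y
  rw [real_inner_self_eq_norm_sq, real_inner_self_eq_norm_sq, hby, hy] at hCS
  have ha2 : 0 < ‖a‖ ^ 2 := by positivity
  nlinarith

theorem norm_wedgeCLM_of_inner_eq_zero {a b : E} (hab : ⟪a, b⟫ = 0) :
    ‖wedgeCLM a b‖ = ‖a‖ * ‖b‖ := by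
  refine le_antisymm (ContinuousLinearMap.opNorm_le_bound _ (by positivity) fun x ↦ ?_) ?_
  · rw [← sq_le_sq₀ (norm_nonneg _) (by positivity), norm_wedgeCLM_apply_sq hab]
    linarith [inner_sq_add_inner_sq_le hab x]
  · rcases eq_or_ne b 0 with rfl | hb
    · simp
    have hwb : wedgeCLM a b b = ‖b‖ ^ 2 • a := by
      rw [wedgeCLM_apply, real_inner_self_eq_norm_sq, hab, zero_smul, sub_zero]
    have := (wedgeCLM a b).le_opNorm b
    rw [hwb, norm_smul, Real.norm_of_nonneg (by positivity)] at this
    have hb' : 0 < ‖b‖ := norm_pos_iff.mpr hb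
    nlinarith

theorem norm_wedgeCLM (a b : E) : ‖wedgeCLM a b‖ = √(‖a‖ ^ 2 * ‖b‖ ^ 2 - ⟪a, b⟫ ^ 2) := by
  rcases eq_or_ne b 0 with rfl | hb
  · simp [wedgeCLM]
  have hb2 : ‖b‖ ^ 2 ≠ 0 := by positivity
  set t := ⟪a, b⟫ / ‖b‖ ^ 2
  have ht : t * ‖b‖ ^ 2 = ⟪a, b⟫ := div_mul_cancel₀ _ hb2
  have hperp : ⟪a - t • b, b⟫ = 0 := by
    rw [inner_sub_left, real_inner_smul_left, real_inner_self_eq_norm_sq, ht, sub_self]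
  have hnorm : ‖a - t • b‖ ^ 2 * ‖b‖ ^ 2 = ‖a‖ ^ 2 * ‖b‖ ^ 2 - ⟪a, b⟫ ^ 2 := by
    rw [norm_sub_sq_real, real_inner_smul_right, norm_smul, Real.norm_eq_abs, mul_pow, sq_abs]
    linear_combination (t * ‖b‖ ^ 2 - ⟪a, b⟫) * ht
  rw [← wedgeCLM_sub_smul_left a b t, norm_wedgeCLM_of_inner_eq_zero hperp, ← hnorm, ← mul_pow,
    Real.sqrt_sq (by positivity)]

end Wedge

section EuclideanSpace

variable {ι : Type*} [Fintype ι]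

theorem toEuclideanCLM_diagonal_commutator_const [DecidableEq ι] (C : ι → ℝ) (c : ℝ) :
    toEuclideanCLM (𝕜 := ℝ) (diagonal C * of (fun _ _ ↦ c) - of (fun _ _ ↦ c) * diagonal C) =
      c • wedgeCLM (WithLp.toLp 2 C) (WithLp.toLp 2 1) := by
  ext x i
  simp only [ofLp_toEuclideanCLM, FunLike.coe_smul, Pi.smul_apply, wedgeCLM_apply]
  simp only [mulVec, dotProduct, Matrix.sub_apply, diagonal_mul, of_apply, mul_diagonal,
    PiLp.inner_apply, Pi.one_apply, RCLike.inner_apply, Real.ringHom_apply, mul_one,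
    PiLp.smul_apply, PiLp.sub_apply, smul_eq_mul, Finset.sum_mul]
  rw [mul_sub, Finset.mul_sum, Finset.mul_sum, ← Finset.sum_sub_distrib]
  exact Finset.sum_congr rfl fun j _ ↦ by ring

theorem EuclideanSpace.norm_toLp_sq (x : ι → ℝ) :
    ‖(WithLp.toLp 2 x : EuclideanSpace ℝ ι)‖ ^ 2 = ∑ i, x i ^ 2 := by
  rw [EuclideanSpace.norm_eq, Real.sq_sqrt (by positivity)]
  simp

theorem EuclideanSpace.inner_toLp_one (x : ι → ℝ) :
    ⟪(WithLp.toLp 2 x : EuclideanSpace ℝ ι), WithLp.toLp 2 1⟫ = ∑ i, x i := by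
  simp [PiLp.inner_apply]

end EuclideanSpace

theorem specNorm_commutator_diagonal_uniformProj_general
    {N : ℕ} (C : Fin N → ℝ)
    (HC P : Matrix (Fin N) (Fin N) ℝ)
    (hHC : HC = Matrix.diagonal C)
    (hP : P = Matrix.of fun _ _ => (1 : ℝ) / N) :
    specNorm (HC * P - P * HC) =
      Real.sqrt ((∑ i, C i ^ 2) / N - ((∑ i, C i) / N) ^ 2) := by
  rw [specNorm, hHC, hP, toEuclideanCLM_diagonal_commutator_const, norm_smul, norm_wedgeCLM,
    EuclideanSpace.norm_toLp_sq, EuclideanSpace.norm_toLp_sq, EuclideanSpace.inner_toLp_one]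
  have hvar : (∑ i, C i ^ 2) / N - ((∑ i, C i) / N) ^ 2 =
      ((∑ i, C i ^ 2) * N - (∑ i, C i) ^ 2) / (N : ℝ) ^ 2 := by
    rcases eq_or_ne (N : ℝ) 0 with hN | hN
    · simp [hN]
    · field_simp
  simp only [Pi.one_apply, one_pow, Finset.sum_const, Finset.card_univ, Fintype.card_fin,
    nsmul_eq_mul, mul_one, one_div, norm_inv, RCLike.norm_natCast]
  rw [hvar, Real.sqrt_div' _ (by positivity), Real.sqrt_sq (by positivity), inv_mul_eq_div]

/-- the spectral norm of the commutator of a diagonal cost matrix with the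
projector onto the uniform vector equals the population standard deviation of the costs. -/
theorem specNorm_commutator_diagonal_uniformProj
    {N : ℕ} (hN : 1 ≤ N) (C : Fin N → ℝ)
    (HC P : Matrix (Fin N) (Fin N) ℝ)
    (hHC : HC = Matrix.diagonal C)
    (hP : P = Matrix.of fun _ _ => (1 : ℝ) / N) :
    specNorm (HC * P - P * HC) =
      Real.sqrt ((∑ i, C i ^ 2) / N - ((∑ i, C i) / N) ^ 2) :=
  specNorm_commutator_diagonal_uniformProj_general C HC P hHC hP
end

section
/- Let N ≥ 1 and C : Fin N → ℝ, and let A be the N×N real matrix with entries A_{ij} = C(i) − C(j). Then ‖A‖ = √(N · Σ_i C(i)² − (Σ_i C(i))²). -/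
/-!
With `u = C` and `v = 1`, the matrix is the wedge `A = u vᵀ - v uᵀ`, which satisfies
`A³ = -g A` for the Gram determinant `g = |u|²|v|² - ⟨u, v⟩²`. As `Aᵀ = -A`, this reads
`(AᵀA)² = g AᵀA`, and the C⋆-identity turns it into `‖A‖⁴ = g ‖A‖²`. So `‖A‖² = g` unless
`A = 0`, in which case `g = tr (AᵀA) / 2 = 0` as well.
-/

open Matrix

theorem CStarRing.eq_zero_or_norm_sq_eq_of_star_mul_self_sq_eq_smul {E : Type*} [NormedRing E]
    [StarRing E] [CStarRing E] [NormedAlgebra ℝ E] (a : E) {t : ℝ} (ht : 0 ≤ t)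
    (h : (star a * a) * (star a * a) = t • (star a * a)) : a = 0 ∨ ‖a‖ ^ 2 = t := by
  have hb : ‖star a * a‖ * ‖star a * a‖ = t * ‖star a * a‖ := by
    rw [← CStarRing.norm_star_mul_self, star_mul, star_star, h, norm_smul, Real.norm_of_nonneg ht]
  rw [CStarRing.norm_star_mul_self] at hb
  rcases eq_or_ne a 0 with ha | ha
  · exact .inl ha
  · exact .inr ((sq ‖a‖).trans
      (mul_right_cancel₀ (mul_self_ne_zero.mpr (norm_ne_zero_iff.mpr ha)) hb))

namespace Matrix

variable {n R : Type*} [CommRing R]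

def wedge (u v : n → R) : Matrix n n R := vecMulVec u v - vecMulVec v u

theorem transpose_wedge (u v : n → R) : (wedge u v)ᵀ = -wedge u v := by
  simp [wedge, transpose_vecMulVec]

variable [Fintype n]

def gramDet (u v : n → R) : R := (u ⬝ᵥ u) * (v ⬝ᵥ v) - (u ⬝ᵥ v) ^ 2

section Algebra

variable (u v : n → R)

theorem wedge_mul_wedge : wedge u v * wedge u v =
    (u ⬝ᵥ v) • (vecMulVec u v + vecMulVec v u) - (v ⬝ᵥ v) • vecMulVec u u
      - (u ⬝ᵥ u) • vecMulVec v v := by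
  simp only [wedge, sub_mul, mul_sub, vecMulVec_mul_vecMulVec, vecMulVec_smul,
    dotProduct_comm v u]
  module

theorem wedge_mul_wedge_mul_wedge :
    wedge u v * wedge u v * wedge u v = -gramDet u v • wedge u v := by
  rw [wedge_mul_wedge]
  simp only [wedge, gramDet, sub_mul, mul_sub, add_mul, smul_mul_assoc, vecMulVec_mul_vecMulVec,
    vecMulVec_smul, dotProduct_comm v u]
  module

theorem trace_wedge_mul_wedge : trace (wedge u v * wedge u v) = -2 * gramDet u v := by
  simp only [wedge_mul_wedge, smul_add, trace_sub, trace_add, trace_smul, trace_vecMulVec,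
    smul_eq_mul, dotProduct_comm v u, gramDet]
  ring

end Algebra

theorem gramDet_eq_zero_of_wedge_eq_zero [NoZeroDivisors R] [CharZero R] {u v : n → R}
    (h : wedge u v = 0) : gramDet u v = 0 := by
  have htrace := trace_wedge_mul_wedge u v
  rw [h, mul_zero, trace_zero] at htrace
  exact (mul_eq_zero.mp htrace.symm).resolve_left (by norm_num)

theorem gramDet_nonneg (u v : n → ℝ) : 0 ≤ gramDet u v := by
  have htrace := (posSemidef_conjTranspose_mul_self (wedge u v)).trace_nonneg
  rw [conjTranspose_eq_transpose_of_trivial, transpose_wedge, neg_mul, trace_neg,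
    trace_wedge_mul_wedge] at htrace
  linarith

open scoped Matrix.Norms.L2Operator

theorem l2_opNorm_wedge [DecidableEq n] (u v : n → ℝ) : ‖wedge u v‖ = √(gramDet u v) := by
  have h : (star (wedge u v) * wedge u v) * (star (wedge u v) * wedge u v)
      = gramDet u v • (star (wedge u v) * wedge u v) := by
    rw [star_eq_conjTranspose, conjTranspose_eq_transpose_of_trivial, transpose_wedge, neg_mul,
      neg_mul_neg, ← mul_assoc, wedge_mul_wedge_mul_wedge, neg_smul, neg_mul, smul_mul_assoc,
      smul_neg]
  rcases CStarRing.eq_zero_or_norm_sq_eq_of_star_mul_self_sq_eq_smul _ (gramDet_nonneg u v) h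
    with h0 | hsq
  · rw [h0, gramDet_eq_zero_of_wedge_eq_zero h0, norm_zero, Real.sqrt_zero]
  · rw [← hsq, Real.sqrt_sq (norm_nonneg _)]

end Matrix

theorem specNorm_skew_rank_two_general
    {N : ℕ} (C : Fin N → ℝ)
    (A : Matrix (Fin N) (Fin N) ℝ)
    (hA : A = Matrix.of fun i j => C i - C j) :
    specNorm A = Real.sqrt (N * (∑ i, C i ^ 2) - (∑ i, C i) ^ 2) := by
  have hA_wedge : A = wedge C 1 := by
    ext i j
    simp [hA, wedge]
  have hgram : gramDet C 1 = N * (∑ i, C i ^ 2) - (∑ i, C i) ^ 2 := by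
    simp [gramDet, dotProduct, sq, mul_comm]
  rw [← hgram, hA_wedge, ← l2_opNorm_wedge, cstar_norm_def]
  rfl

/-- the spectral norm of the skew-symmetric matrix `A_{ij} = C(i) - C(j)`. -/
theorem specNorm_skew_rank_two
    {N : ℕ} (hN : 1 ≤ N) (C : Fin N → ℝ)
    (A : Matrix (Fin N) (Fin N) ℝ)
    (hA : A = Matrix.of fun i j => C i - C j) :
    specNorm A = Real.sqrt (N * (∑ i, C i ^ 2) - (∑ i, C i) ^ 2) :=
  specNorm_skew_rank_two_general C A hA
end

section
/- Let G be a simple graph on a finite vertex set V with edge set E, |E| ≥ 1, and let cut(W) denote the number of edges with exactly one endpoint in W. Let N = 2^{|V|}, index coordinates of ℂ^N by subsets W ⊆ V, let H_C be the diagonal matrix with diagonal entries cut(W), let C_max = max_W cut(W), and let H₁ = C_max·I − H_C. Let ψ₀ be the uniform unit vector and H₀ = H_Grover = I − ψ₀ψ₀*. Let p ≥ 1, let β, γ : Fin p → ℝ satisfy |β_j| ≤ 2π and |γ_j| ≤ 2π, let ψ_p be the QAOA state after p rounds, and let λ ∈ ℝ be defined by ⟨ψ_p, H_C ψ_p⟩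 = λ·C_max. Then p · 2π · √|E| ≥ 1 − |⟨ψ₀, ψ_p⟩|² + λ·C_max − |E|/2. -/
open Matrix Complex
open scoped ComplexOrder

/-- `cutValue G W` is the number of edges of `G` with exactly one endpoint in `W`. -/
noncomputable def cutValue {V : Type*} [Fintype V] [DecidableEq V]
    (G : SimpleGraph V) [DecidableRel G.Adj] (W : Finset V) : ℕ :=
  (G.edgeFinset.filter fun e => ∃ a ∈ W, ∃ b ∉ W, e = s(a, b)).card

/-!
Over a uniformly random `W ⊆ V`, `cut W - |E|/2` is a sum of one sign `±1/2` per edge, and the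
signs of distinct edges are orthogonal (flipping a vertex of one edge that is not on the other
negates their product), so `σ := ‖(H_C - |E|/2) ψ₀‖ = √|E| / 2`.

Energies are measured for the centred Hamiltonian `A = H_C - |E|/2`. The phase separator
commutes with `A` and preserves them. The Grover mixer sends `ψ` to `e ψ + c ψ₀` with `|e| = 1`
and `|c| ≤ 2`, and for hermitian `A` the energies of `x + y` and `x` differ only by inner
products against `A y`, so each round adds at most `4σ`, whatever the angles. With the initial
energy at most `σ` (Cauchy–Schwarz), `⟨ψ_p, H_C ψ_p⟩ ≤ |E|/2 + (4p + 1)σ`, and `2πp√|E|` exceeds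
`1 + (2p + 1/2)√|E|` once `p, |E| ≥ 1`.
-/

section CutVariance

open Finset

variable {V : Type*}

open Classical in
noncomputable def cutSign (W : Finset V) (e : Sym2 V) : ℝ :=
  if ∃ a ∈ W, ∃ b ∉ W, e = s(a, b) then 1 / 2 else -1 / 2

lemma cutSign_mul_self (W : Finset V) (e : Sym2 V) : cutSign W e * cutSign W e = 1 / 4 := by
  unfold cutSign
  split_ifs <;> norm_num

variable [DecidableEq V]

lemma cutSign_mk (W : Finset V) (u v : V) :
    cutSign W s(u, v) = if (u ∈ W ↔ v ∈ W) then -1 / 2 else 1 / 2 := by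
  have hcut : (∃ a ∈ W, ∃ b ∉ W, s(u, v) = s(a, b)) ↔ ¬(u ∈ W ↔ v ∈ W) := by
    constructor
    · rintro ⟨a, ha, b, hb, h⟩
      rcases Sym2.eq_iff.1 h with ⟨rfl, rfl⟩ | ⟨rfl, rfl⟩ <;> tauto
    · intro h
      by_cases hu : u ∈ W
      · exact ⟨u, hu, v, fun hv => h (iff_of_true hu hv), rfl⟩
      · exact ⟨v, by tauto, u, hu, Sym2.eq_swap⟩
  simp only [cutSign, hcut, ite_not]

lemma cutSign_symmDiff_singleton_of_mem {e : Sym2 V} (he : ¬e.IsDiag) {x : V} (hx : x ∈ e)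
    (W : Finset V) : cutSign (symmDiff W {x}) e = -cutSign W e := by
  obtain ⟨y, rfl⟩ := Sym2.mem_iff_exists.1 hx
  have hxy : x ≠ y := by simpa using he
  by_cases hxW : x ∈ W <;> by_cases hyW : y ∈ W <;>
    norm_num [cutSign_mk, mem_symmDiff, hxW, hyW, hxy.symm]

lemma cutSign_symmDiff_singleton_of_notMem {e : Sym2 V} {x : V} (hx : x ∉ e)
    (W : Finset V) : cutSign (symmDiff W {x}) e = cutSign W e := by
  induction e using Sym2.inductionOn with
  | hf u v =>
    obtain ⟨hxu, hxv⟩ : x ≠ u ∧ x ≠ v := by simpa [eq_comm] using hx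
    simp [cutSign_mk, mem_symmDiff, Ne.symm hxu, Ne.symm hxv]

variable [Fintype V]

lemma sum_cutSign_mul_cutSign {e f : Sym2 V} (he : ¬e.IsDiag) :
    ∑ W : Finset V, cutSign W e * cutSign W f
      = if e = f then 2 ^ Fintype.card V / 4 else 0 := by
  split_ifs with hef
  · rw [← hef, Fintype.sum_congr _ _ fun W => cutSign_mul_self W e, sum_const, card_univ,
      Fintype.card_finset, nsmul_eq_mul, Nat.cast_pow, Nat.cast_ofNat]
    ring
  · obtain ⟨x, hxe, hxf⟩ : ∃ x ∈ e, x ∉ f := by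
      by_contra! h
      induction e using Sym2.inductionOn with
      | hf u v =>
        exact hef ((Sym2.mem_and_mem_iff (by simpa using he)).1
          ⟨h u (Sym2.mem_mk_left u v), h v (Sym2.mem_mk_right u v)⟩).symm
    refine sum_ninvolution (fun W => symmDiff W {x}) (fun W => ?_) (fun W _ => by simp)
      (fun _ => mem_univ _) (fun W => by simp)
    rw [cutSign_symmDiff_singleton_of_mem he hxe, cutSign_symmDiff_singleton_of_notMem hxf]
    ring

variable (G : SimpleGraph V) [DecidableRel G.Adj]

lemma cutValue_sub_half_eq_sum_cutSign (W : Finset V) :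
    (cutValue G W : ℝ) - #G.edgeFinset / 2 = ∑ e ∈ G.edgeFinset, cutSign W e := by
  rw [cutValue, natCast_card_filter, div_eq_mul_one_div, ← nsmul_eq_mul, ← sum_const,
    ← sum_sub_distrib]
  refine sum_congr rfl fun e _ => ?_
  unfold cutSign
  split_ifs <;> norm_num

theorem sum_cutValue_sub_half_sq :
    ∑ W : Finset V, ((cutValue G W : ℝ) - #G.edgeFinset / 2) ^ 2
      = 2 ^ Fintype.card V * (#G.edgeFinset : ℝ) / 4 := by
  have hdiag : ∀ e ∈ G.edgeFinset, ¬e.IsDiag := fun e he =>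
    G.not_isDiag_of_mem_edgeSet (SimpleGraph.mem_edgeFinset.1 he)
  simp_rw [cutValue_sub_half_eq_sum_cutSign, sq, sum_mul_sum]
  rw [sum_comm]
  calc ∑ e ∈ G.edgeFinset, ∑ W : Finset V, ∑ f ∈ G.edgeFinset, cutSign W e * cutSign W f
      = ∑ e ∈ G.edgeFinset, ∑ f ∈ G.edgeFinset,
          if e = f then (2 : ℝ) ^ Fintype.card V / 4 else 0 := by
        refine sum_congr rfl fun e he => ?_
        rw [sum_comm]
        exact sum_congr rfl fun f _ => sum_cutSign_mul_cutSign (hdiag e he)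
    _ = 2 ^ Fintype.card V * (#G.edgeFinset : ℝ) / 4 := by
        rw [sum_congr rfl fun e he => by rw [sum_ite_eq, if_pos he], sum_const, nsmul_eq_mul]
        ring

end CutVariance

section EuclideanMatrix

open Matrix WithLp

variable {ι : Type*} [Fintype ι]

lemma star_dotProduct_eq_inner (x y : ι → ℂ) :
    star x ⬝ᵥ y = inner ℂ (toLp 2 x) (toLp 2 y) := by
  rw [EuclideanSpace.inner_toLp_toLp, dotProduct_comm]

lemma star_dotProduct_self_eq_norm_sq (x : ι → ℂ) :
    star x ⬝ᵥ x = (‖toLp 2 x‖ ^ 2 : ℝ) := by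
  rw [star_dotProduct_eq_inner, inner_self_eq_norm_sq_to_K]
  push_cast
  rfl

lemma star_mulVec_dotProduct_mulVec_mulVec_s10 (U A : Matrix ι ι ℂ) (x y : ι → ℂ) :
    star (U *ᵥ x) ⬝ᵥ (A *ᵥ (U *ᵥ y)) = star x ⬝ᵥ ((Uᴴ * A * U) *ᵥ y) := by
  rw [star_mulVec, ← dotProduct_mulVec, mulVec_mulVec, mulVec_mulVec, Matrix.mul_assoc]

variable [DecidableEq ι]

lemma star_dotProduct_mulVec_eq_inner (A : Matrix ι ι ℂ) (x y : ι → ℂ) :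
    star x ⬝ᵥ (A *ᵥ y) = inner ℂ (toLp 2 x) (toEuclideanLin A (toLp 2 y)) := by
  rw [star_dotProduct_eq_inner, toLpLin_apply]

lemma star_mulVec_dotProduct_mulVec_mulVec_of_mem_unitary {U A : Matrix ι ι ℂ}
    (hU : U ∈ unitary (Matrix ι ι ℂ)) (hUA : Commute U A) (x : ι → ℂ) :
    star (U *ᵥ x) ⬝ᵥ (A *ᵥ (U *ᵥ x)) = star x ⬝ᵥ (A *ᵥ x) := by
  rw [star_mulVec_dotProduct_mulVec_mulVec_s10, Matrix.mul_assoc, ← hUA.eq, ← Matrix.mul_assoc,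
    ← star_eq_conjTranspose, Unitary.star_mul_self_of_mem hU, Matrix.one_mul]

lemma norm_toLp_mulVec_of_mem_unitary {U : Matrix ι ι ℂ} (hU : U ∈ unitary (Matrix ι ι ℂ))
    (x : ι → ℂ) : ‖toLp 2 (U *ᵥ x)‖ = ‖toLp 2 x‖ := by
  have h := star_mulVec_dotProduct_mulVec_mulVec_of_mem_unitary hU (Commute.one_right U) x
  rw [Matrix.one_mulVec, Matrix.one_mulVec, star_dotProduct_self_eq_norm_sq,
    star_dotProduct_self_eq_norm_sq, Complex.ofReal_inj] at h
  exact (pow_left_inj₀ (norm_nonneg _) (norm_nonneg _) two_ne_zero).1 h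

lemma exp_mem_unitary_of_isHermitian {H : Matrix ι ι ℂ} (hH : H.IsHermitian) (t : ℝ) :
    NormedSpace.exp ((-(t : ℂ) * Complex.I) • H) ∈ unitary (Matrix ι ι ℂ) := by
  set X := (-(t : ℂ) * Complex.I) • H
  have hX : star X = -X := by
    simp [X, star_smul, star_eq_conjTranspose, hH.eq, Complex.conj_ofReal]
  have hcomm : Commute X (-X) := (Commute.refl X).neg_right
  rw [Unitary.mem_iff, NormedSpace.star_exp, hX, ← Matrix.exp_add_of_commute _ _ hcomm.symm,
    ← Matrix.exp_add_of_commute _ _ hcomm, neg_add_cancel, add_neg_cancel, NormedSpace.exp_zero]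
  exact ⟨rfl, rfl⟩

end EuclideanMatrix

section Idempotent

variable {𝔸 : Type*} [Ring 𝔸] [Algebra ℂ 𝔸] [TopologicalSpace 𝔸] [IsTopologicalRing 𝔸]
  [ContinuousSMul ℂ 𝔸] [T2Space 𝔸]

theorem exp_smul_of_isIdempotentElem {P : 𝔸} (hP : IsIdempotentElem P) (z : ℂ) :
    NormedSpace.exp (z • P) = 1 + (Complex.exp z - 1) • P := by
  have hterm : ∀ n : ℕ, ((n.factorial : ℂ)⁻¹ • (z • P) ^ n)
      = ((n.factorial : ℂ)⁻¹ * z ^ n) • P + if n = 0 then 1 - P else 0 := by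
    rintro (_ | n)
    · simp
    · rw [smul_pow, hP.pow_succ_eq, smul_smul, if_neg n.succ_ne_zero, add_zero]
  have hscalar : HasSum (fun n : ℕ => (n.factorial : ℂ)⁻¹ * z ^ n) (Complex.exp z) := by
    rw [Complex.exp_eq_exp_ℂ, NormedSpace.exp_eq_tsum ℂ]
    exact (NormedSpace.expSeries_summable' z).hasSum
  rw [NormedSpace.exp_eq_tsum ℂ]
  simp only [hterm]
  refine ((hscalar.smul_const P).add (hasSum_ite_eq 0 (1 - P))).tsum_eq.trans ?_
  rw [sub_smul, one_smul]
  abel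

end Idempotent

theorem LinearMap.IsSymmetric.re_inner_map_add_le {𝕜 E : Type*} [RCLike 𝕜]
    [NormedAddCommGroup E] [InnerProductSpace 𝕜 E] {T : E →ₗ[𝕜] E} (hT : T.IsSymmetric)
    (x y : E) :
    RCLike.re (inner 𝕜 (x + y) (T (x + y)))
      ≤ RCLike.re (inner 𝕜 x (T x)) + ‖T y‖ * (‖x + y‖ + ‖x‖) := by
  have hsplit : inner 𝕜 (x + y) (T (x + y))
      = inner 𝕜 x (T x) + inner 𝕜 x (T y) + inner 𝕜 (T y) (x + y) := by
    rw [hT y (x + y), inner_add_left, map_add, inner_add_right]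
  have hxy : RCLike.re (inner 𝕜 x (T y)) = RCLike.re (inner 𝕜 (T y) x) := by
    rw [← inner_conj_symm, RCLike.conj_re]
  rw [hsplit, map_add, map_add, hxy, mul_add]
  have h1 := (RCLike.re_le_norm (inner 𝕜 (T y) (x + y))).trans (norm_inner_le_norm (T y) (x + y))
  have h2 := (RCLike.re_le_norm (inner 𝕜 (T y) x)).trans (norm_inner_le_norm (T y) x)
  linarith

section GroverMixer

open Matrix WithLp

variable {ι : Type*} [Fintype ι]

def energy (A : Matrix ι ι ℂ) (ψ : ι → ℂ) : ℝ := (star ψ ⬝ᵥ (A *ᵥ ψ)).re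

lemma energy_le_norm_mul_norm (A : Matrix ι ι ℂ) (ψ : ι → ℂ) :
    energy A ψ ≤ ‖toLp 2 ψ‖ * ‖toLp 2 (A *ᵥ ψ)‖ := by
  rw [energy, star_dotProduct_eq_inner]
  exact (Complex.re_le_norm _).trans (norm_inner_le_norm _ _)

variable [DecidableEq ι]

def groverMixer (ψ0 : ι → ℂ) : Matrix ι ι ℂ := 1 - vecMulVec ψ0 (star ψ0)

omit [Fintype ι] in
lemma isHermitian_groverMixer (ψ0 : ι → ℂ) : (groverMixer ψ0).IsHermitian := by
  refine isHermitian_one.sub ?_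
  rw [IsHermitian, conjTranspose_vecMulVec, star_star]

lemma exp_smul_groverMixer_mulVec {ψ0 : ι → ℂ} (hψ0 : star ψ0 ⬝ᵥ ψ0 = 1) (z : ℂ)
    (ψ : ι → ℂ) :
    NormedSpace.exp (z • groverMixer ψ0) *ᵥ ψ
      = Complex.exp z • ψ + ((1 - Complex.exp z) * (star ψ0 ⬝ᵥ ψ)) • ψ0 := by
  have hP : IsIdempotentElem (vecMulVec ψ0 (star ψ0)) := by
    rw [IsIdempotentElem, vecMulVec_mul_vecMulVec, hψ0, one_smul]
  rw [groverMixer, exp_smul_of_isIdempotentElem hP.one_sub, add_mulVec, smul_mulVec, sub_mulVec,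
    vecMulVec_mulVec, one_mulVec]
  ext i
  simp only [Pi.add_apply, Pi.smul_apply, Pi.sub_apply, smul_eq_mul, MulOpposite.smul_eq_mul_unop,
    MulOpposite.unop_op]
  ring

lemma energy_sub_smul_one (A : Matrix ι ι ℂ) (c : ℝ) (ψ : ι → ℂ) :
    energy (A - (c : ℂ) • 1) ψ = energy A ψ - c * ‖toLp 2 ψ‖ ^ 2 := by
  rw [energy, energy, sub_mulVec, smul_mulVec, one_mulVec, dotProduct_sub, dotProduct_smul,
    star_dotProduct_self_eq_norm_sq, smul_eq_mul, Complex.sub_re, Complex.re_ofReal_mul,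
    Complex.ofReal_re]

lemma Matrix.IsHermitian.energy_add_le {A : Matrix ι ι ℂ} (hA : A.IsHermitian) (x y : ι → ℂ) :
    energy A (x + y)
      ≤ energy A x + ‖toLp 2 (A *ᵥ y)‖ * (‖toLp 2 (x + y)‖ + ‖toLp 2 x‖) := by
  have h := (isSymmetric_toEuclideanLin_iff.2 hA).re_inner_map_add_le (toLp 2 x) (toLp 2 y)
  have hy : toLp 2 (A *ᵥ y) = toEuclideanLin A (toLp 2 y) := (toLpLin_apply _ _ _ _).symm
  rwa [energy, energy, star_dotProduct_mulVec_eq_inner, star_dotProduct_mulVec_eq_inner, hy,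
    toLp_add]

theorem energy_exp_groverMixer_mulVec_le {A : Matrix ι ι ℂ} (hA : A.IsHermitian)
    {ψ0 ψ : ι → ℂ} (hψ0 : ‖toLp 2 ψ0‖ = 1) (hψ : ‖toLp 2 ψ‖ = 1) (t : ℝ) :
    energy A (NormedSpace.exp ((-(t : ℂ) * Complex.I) • groverMixer ψ0) *ᵥ ψ)
      ≤ energy A ψ + 4 * ‖toLp 2 (A *ᵥ ψ0)‖ := by
  set U := NormedSpace.exp ((-(t : ℂ) * Complex.I) • groverMixer ψ0)
  set e := Complex.exp (-(t : ℂ) * Complex.I)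
  set c := (1 - e) * (star ψ0 ⬝ᵥ ψ)
  have he : ‖e‖ = 1 := by
    simpa [e] using Complex.norm_exp_ofReal_mul_I (-t)
  have hc : ‖c‖ ≤ 2 := by
    have h1 : ‖1 - e‖ ≤ 2 := (norm_sub_le _ _).trans (by rw [norm_one, he]; norm_num)
    have h2 : ‖star ψ0 ⬝ᵥ ψ‖ ≤ 1 := by
      rw [star_dotProduct_eq_inner]
      exact (norm_inner_le_norm _ _).trans (by rw [hψ0, hψ, one_mul])
    simpa [c, norm_mul] using mul_le_mul h1 h2 (norm_nonneg _) zero_le_two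
  have hUψ : U *ᵥ ψ = e • ψ + c • ψ0 := by
    have hψ0' : star ψ0 ⬝ᵥ ψ0 = 1 := by simp [star_dotProduct_self_eq_norm_sq, hψ0]
    exact exp_smul_groverMixer_mulVec hψ0' _ ψ
  have hnorm : ‖toLp 2 (U *ᵥ ψ)‖ = 1 := by
    rw [norm_toLp_mulVec_of_mem_unitary (exp_mem_unitary_of_isHermitian
      (isHermitian_groverMixer ψ0) t), hψ]
  have heψ : ‖toLp 2 (e • ψ)‖ = 1 := by rw [toLp_smul, norm_smul, he, hψ, one_mul]
  have henergy : energy A (e • ψ) = energy A ψ := by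
    have hee : e * star e = 1 := by
      rw [RCLike.star_def, RCLike.mul_conj, he]
      norm_num
    simp only [energy, mulVec_smul, star_smul, smul_dotProduct, dotProduct_smul, smul_eq_mul,
      ← mul_assoc, hee, one_mul]
  have h := hA.energy_add_le (e • ψ) (c • ψ0)
  rw [← hUψ, hnorm, heψ, henergy, mulVec_smul, toLp_smul, norm_smul] at h
  nlinarith [norm_nonneg (toLp 2 (A *ᵥ ψ0))]

end GroverMixer

section QAOA

open Matrix WithLp

variable {ι : Type*} [Fintype ι] [DecidableEq ι]

lemma qaoaState_zero (H0 H1 : Matrix ι ι ℂ) (β γ : Fin 0 → ℝ) (ψ0 : ι → ℂ) :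
    qaoaState H0 H1 0 β γ ψ0 = ψ0 := by
  simp [qaoaState]

lemma qaoaState_succ (H0 H1 : Matrix ι ι ℂ) (p : ℕ) (β γ : Fin (p + 1) → ℝ) (ψ0 : ι → ℂ) :
    qaoaState H0 H1 (p + 1) β γ ψ0
      = NormedSpace.exp ((-(β (Fin.last p) : ℂ) * Complex.I) • H0) *ᵥ
        (NormedSpace.exp ((-(γ (Fin.last p) : ℂ) * Complex.I) • H1) *ᵥ
          qaoaState H0 H1 p (β ∘ Fin.castSucc) (γ ∘ Fin.castSucc) ψ0) := by
  simp only [qaoaState, List.ofFn_succ, List.prod_cons, Fin.rev_zero, Fin.rev_succ,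
    Function.comp_apply, mulVec_mulVec, Matrix.mul_assoc]

theorem norm_toLp_qaoaState {H0 H1 : Matrix ι ι ℂ} (hH0 : H0.IsHermitian) (hH1 : H1.IsHermitian)
    (p : ℕ) (β γ : Fin p → ℝ) (ψ0 : ι → ℂ) :
    ‖toLp 2 (qaoaState H0 H1 p β γ ψ0)‖ = ‖toLp 2 ψ0‖ := by
  induction p with
  | zero => rw [qaoaState_zero]
  | succ p ih =>
    rw [qaoaState_succ, norm_toLp_mulVec_of_mem_unitary (exp_mem_unitary_of_isHermitian hH0 _),
      norm_toLp_mulVec_of_mem_unitary (exp_mem_unitary_of_isHermitian hH1 _), ih]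

theorem energy_qaoaState_groverMixer_le {A H1 : Matrix ι ι ℂ} (hA : A.IsHermitian)
    (hH1 : H1.IsHermitian) (hcomm : Commute H1 A) {ψ0 : ι → ℂ} (hψ0 : ‖toLp 2 ψ0‖ = 1)
    (p : ℕ) (β γ : Fin p → ℝ) :
    energy A (qaoaState (groverMixer ψ0) H1 p β γ ψ0)
      ≤ energy A ψ0 + 4 * p * ‖toLp 2 (A *ᵥ ψ0)‖ := by
  induction p with
  | zero => simp [qaoaState_zero]
  | succ p ih =>
    set ψ := qaoaState (groverMixer ψ0) H1 p (β ∘ Fin.castSucc) (γ ∘ Fin.castSucc) ψ0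
    set U := NormedSpace.exp ((-(γ (Fin.last p) : ℂ) * Complex.I) • H1)
    have hU : U ∈ unitary (Matrix ι ι ℂ) := exp_mem_unitary_of_isHermitian hH1 _
    have hUψ : ‖toLp 2 (U *ᵥ ψ)‖ = 1 := by
      rw [norm_toLp_mulVec_of_mem_unitary hU,
        norm_toLp_qaoaState (isHermitian_groverMixer ψ0) hH1, hψ0]
    have hcost : energy A (U *ᵥ ψ) = energy A ψ :=
      congrArg Complex.re (star_mulVec_dotProduct_mulVec_mulVec_of_mem_unitary hU
        (hcomm.smul_left _).exp_left ψ)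
    have hmix := energy_exp_groverMixer_mulVec_le hA hψ0 hUψ (β (Fin.last p))
    rw [hcost] at hmix
    rw [qaoaState_succ]
    push_cast
    linarith [ih (β ∘ Fin.castSucc) (γ ∘ Fin.castSucc)]

end QAOA

section MaxCut

open Matrix WithLp

lemma norm_toLp_ofReal_mul_const {ι : Type*} [Fintype ι] (f : ι → ℝ) (c : ℂ) :
    ‖toLp 2 (fun i => (f i : ℂ) * c)‖ = √(∑ i, f i ^ 2) * ‖c‖ := by
  rw [EuclideanSpace.norm_eq, ← Real.sqrt_sq (norm_nonneg c), ← Real.sqrt_mul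
    (Finset.sum_nonneg fun i _ => sq_nonneg (f i)), Finset.sum_mul]
  simp [mul_pow]

variable {V : Type*} [Fintype V]

lemma norm_toLp_const_inv_sqrt_card :
    ‖toLp 2 (fun _ : Finset V => ((Real.sqrt (2 ^ Fintype.card V))⁻¹ : ℂ))‖ = 1 := by
  have h := norm_toLp_ofReal_mul_const (fun _ : Finset V => 1)
    ((Real.sqrt (2 ^ Fintype.card V))⁻¹ : ℂ)
  simp only [Complex.ofReal_one, one_mul, one_pow, Finset.sum_const, Finset.card_univ,
    Fintype.card_finset, nsmul_eq_mul, mul_one] at h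
  rw [h, norm_inv, Complex.norm_real, Real.norm_of_nonneg (Real.sqrt_nonneg _), Nat.cast_pow,
    Nat.cast_ofNat, mul_inv_cancel₀ (by positivity)]

lemma norm_toLp_cutValue_sub_half_mulVec_const [DecidableEq V] (G : SimpleGraph V)
    [DecidableRel G.Adj] :
    ‖toLp 2 ((diagonal (fun W => (cutValue G W : ℂ))
        - ((G.edgeFinset.card / 2 : ℝ) : ℂ) • 1) *ᵥ
      fun _ : Finset V => ((Real.sqrt (2 ^ Fintype.card V))⁻¹ : ℂ))‖
      = √(G.edgeFinset.card : ℝ) / 2 := by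
  have hvec : ((diagonal (fun W => (cutValue G W : ℂ))
        - ((G.edgeFinset.card / 2 : ℝ) : ℂ) • 1) *ᵥ
      fun _ : Finset V => ((Real.sqrt (2 ^ Fintype.card V))⁻¹ : ℂ))
      = fun W => (((cutValue G W : ℝ) - G.edgeFinset.card / 2 : ℝ) : ℂ)
          * ((Real.sqrt (2 ^ Fintype.card V))⁻¹ : ℂ) := by
    ext W
    simp [sub_mulVec, smul_mulVec, mulVec_diagonal, sub_mul]
  rw [hvec, norm_toLp_ofReal_mul_const, sum_cutValue_sub_half_sq, norm_inv, Complex.norm_real,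
    Real.norm_of_nonneg (Real.sqrt_nonneg _), mul_div_assoc, Real.sqrt_mul (by positivity),
    Real.sqrt_div' _ (by norm_num : (0 : ℝ) ≤ 4), show √(4 : ℝ) = 2 by
      rw [show (4 : ℝ) = 2 ^ 2 by norm_num, Real.sqrt_sq zero_le_two]]
  field_simp

end MaxCut

theorem qaoa_rounds_lower_bound_grover_mixer_maxcut_general
    {V : Type*} [Fintype V] [DecidableEq V]
    (G : SimpleGraph V) [DecidableRel G.Adj] (hE : 1 ≤ G.edgeFinset.card)
    (HC H0 H1 : Matrix (Finset V) (Finset V) ℂ)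
    (hHC : HC = Matrix.diagonal fun W => (cutValue G W : ℂ))
    (hH1 : H1 = ((Finset.univ.sup (cutValue G) : ℕ) : ℂ) •
        (1 : Matrix (Finset V) (Finset V) ℂ) - HC)
    (ψ0 : Finset V → ℂ) (hψ0 : ψ0 = fun _ => ((Real.sqrt (2 ^ Fintype.card V))⁻¹ : ℂ))
    (hH0 : H0 = 1 - Matrix.vecMulVec ψ0 (star ψ0))
    (p : ℕ) (hp : 1 ≤ p) (β γ : Fin p → ℝ)
    (ψp : Finset V → ℂ) (hψp : ψp = qaoaState H0 H1 p β γ ψ0)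
    (lam : ℝ)
    (hlam : (star ψp ⬝ᵥ (HC *ᵥ ψp)).re = lam * (Finset.univ.sup (cutValue G) : ℕ)) :
    (p : ℝ) * (2 * Real.pi) * Real.sqrt (G.edgeFinset.card : ℝ) ≥
      1 - ‖star ψ0 ⬝ᵥ ψp‖ ^ 2 +
        lam * (Finset.univ.sup (cutValue G) : ℕ) - (G.edgeFinset.card : ℝ) / 2 := by
  set B := HC - ((G.edgeFinset.card / 2 : ℝ) : ℂ) • 1 with hB_def
  have hHC_herm : HC.IsHermitian :=
    hHC ▸ Matrix.isHermitian_diagonal_of_self_adjoint _ (by ext; simp)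
  have hB : B.IsHermitian := hHC_herm.sub (Matrix.isHermitian_one.smul (Complex.conj_ofReal _))
  have hH1_herm : H1.IsHermitian := hH1 ▸ (Matrix.isHermitian_one.smul (by simp)).sub hHC_herm
  have hcomm : Commute H1 B := hH1 ▸
    (((Commute.one_left HC).smul_left _).sub_left (Commute.refl HC)).sub_right
      ((Commute.one_right _).smul_right _)
  have hψ0_norm : ‖WithLp.toLp 2 ψ0‖ = 1 := hψ0 ▸ norm_toLp_const_inv_sqrt_card
  have hσ : ‖WithLp.toLp 2 (B *ᵥ ψ0)‖ = √(G.edgeFinset.card : ℝ) / 2 := by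
    rw [hB_def, hHC, hψ0]
    exact norm_toLp_cutValue_sub_half_mulVec_const G
  have hψp_norm : ‖WithLp.toLp 2 ψp‖ = 1 := by
    rw [hψp, norm_toLp_qaoaState (hH0 ▸ isHermitian_groverMixer ψ0) hH1_herm, hψ0_norm]
  have hrounds : energy B ψp ≤ energy B ψ0 + 4 * p * (√(G.edgeFinset.card : ℝ) / 2) := by
    subst hψp hH0
    exact hσ ▸ energy_qaoaState_groverMixer_le hB hH1_herm hcomm hψ0_norm p β γ
  have hinit : energy B ψ0 ≤ √(G.edgeFinset.card : ℝ) / 2 := by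
    simpa [hψ0_norm, hσ] using energy_le_norm_mul_norm B ψ0
  have hshift : energy B ψp
      = lam * (Finset.univ.sup (cutValue G) : ℕ) - G.edgeFinset.card / 2 := by
    rw [hB_def, energy_sub_smul_one, hψp_norm, one_pow, mul_one, energy, hlam]
  have hm : 1 ≤ √(G.edgeFinset.card : ℝ) := Real.one_le_sqrt.2 (by exact_mod_cast hE)
  have hp' : (1 : ℝ) ≤ p := by exact_mod_cast hp
  nlinarith [sq_nonneg ‖star ψ0 ⬝ᵥ ψp‖, mul_nonneg (sub_nonneg.2 hp') (zero_le_one.trans hm),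
    mul_nonneg (sub_nonneg.2 Real.pi_gt_three.le)
      (mul_nonneg (zero_le_one.trans hp') (zero_le_one.trans hm))]

/-- lower bound on the number of Grover-mixer QAOA rounds for Max-Cut. -/
theorem qaoa_rounds_lower_bound_grover_mixer_maxcut
    {V : Type*} [Fintype V] [DecidableEq V]
    (G : SimpleGraph V) [DecidableRel G.Adj] (hE : 1 ≤ G.edgeFinset.card)
    (HC H0 H1 : Matrix (Finset V) (Finset V) ℂ)
    (hHC : HC = Matrix.diagonal fun W => (cutValue G W : ℂ))
    (hH1 : H1 = ((Finset.univ.sup (cutValue G) : ℕ) : ℂ) •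
        (1 : Matrix (Finset V) (Finset V) ℂ) - HC)
    (ψ0 : Finset V → ℂ) (hψ0 : ψ0 = fun _ => ((Real.sqrt (2 ^ Fintype.card V))⁻¹ : ℂ))
    (hH0 : H0 = 1 - Matrix.vecMulVec ψ0 (star ψ0))
    (p : ℕ) (hp : 1 ≤ p) (β γ : Fin p → ℝ)
    (hβ : ∀ j, |β j| ≤ 2 * Real.pi) (hγ : ∀ j, |γ j| ≤ 2 * Real.pi)
    (ψp : Finset V → ℂ) (hψp : ψp = qaoaState H0 H1 p β γ ψ0)
    (lam : ℝ)
    (hlam : (star ψp ⬝ᵥ (HC *ᵥ ψp)).re = lam * (Finset.univ.sup (cutValue G) : ℕ)) :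
    (p : ℝ) * (2 * Real.pi) * Real.sqrt (G.edgeFinset.card : ℝ) ≥
      1 - ‖star ψ0 ⬝ᵥ ψp‖ ^ 2 +
        lam * (Finset.univ.sup (cutValue G) : ℕ) - (G.edgeFinset.card : ℝ) / 2 :=
  qaoa_rounds_lower_bound_grover_mixer_maxcut_general G hE HC H0 H1 hHC hH1 ψ0 hψ0 hH0 p hp β γ ψp
    hψp lam hlam
end

section
/- Let n and k be integers with 0 < k < n/2. Let V = { z : Fin n → ZMod 2 | the Hamming weight of z lies in {k−1, k, k+1} }, and let M be the real matrix indexed by V × V with M(z, w) = 1 if the Hamming distance between z and w equals 1 and M(z, w) = 0 otherwise (the adjacency matrix of the subgraph of the n-dimensional hypercube Q_n induced by the vertices of Hamming weight k−1, k, and k+1). Then ‖M‖ = √(2k(n − k) + n); equivalently, the spectral radius of this induced subgraph equals √(2k(n − k) + n). -/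
open Matrix

/-!
The function taking the values `n - k + 1`, `λ = √(2k(n - k) + n)` and `k + 1` on the layers of
weight `k - 1`, `k`, `k + 1` is a positive eigenvector of the induced adjacency matrix with
eigenvalue `λ`: a vertex of weight `m` has `m` neighbours of weight `m - 1` and `n - m` of weight
`m + 1`, and `λ² = k(n - k + 1) + (n - k)(k + 1)`. For an entrywise nonnegative symmetric matrix,
the eigenvalue of a positive eigenvector is its spectral norm: it is an eigenvalue, and weighted
Cauchy–Schwarz (the Schur test) bounds `‖A x‖²` by `λ² ‖x‖²`.
-/

open Finset

namespace Matrix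

variable {ι : Type*} [Fintype ι] {A : Matrix ι ι ℝ} {v : ι → ℝ} {r : ℝ}

theorem sum_sq_mulVec_le_of_pos_eigenvector (hA : ∀ i j, 0 ≤ A i j) (hsymm : A.IsSymm)
    (hv : ∀ i, 0 < v i) (hAv : A *ᵥ v = r • v) (x : ι → ℝ) :
    ∑ i, (A *ᵥ x) i ^ 2 ≤ r ^ 2 * ∑ i, x i ^ 2 := by
  have hrow (i : ι) : (A *ᵥ x) i ^ 2 ≤ r * v i * ∑ j, A i j * (x j ^ 2 / v j) := by
    have hCS := sum_sq_le_sum_mul_sum_of_sq_le_mul univ (r := fun j => A i j * x j)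
      (f := fun j => A i j * v j) (g := fun j => A i j * (x j ^ 2 / v j))
      (fun j _ => mul_nonneg (hA i j) (hv j).le)
      (fun j _ => mul_nonneg (hA i j) (div_nonneg (sq_nonneg _) (hv j).le))
      (fun j _ => le_of_eq (by field_simp [(hv j).ne']))
    have hvi : ∑ j, A i j * v j = r * v i := congrFun hAv i
    rwa [hvi] at hCS
  calc ∑ i, (A *ᵥ x) i ^ 2 ≤ ∑ i, r * v i * ∑ j, A i j * (x j ^ 2 / v j) :=
        sum_le_sum fun i _ => hrow i
    _ = r * ∑ j, x j ^ 2 / v j * ∑ i, A j i * v i := by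
        simp_rw [mul_sum]
        rw [sum_comm]
        refine sum_congr rfl fun j _ => sum_congr rfl fun i _ => ?_
        rw [hsymm.apply j i]
        ring
    _ = r ^ 2 * ∑ j, x j ^ 2 := by
        rw [mul_sum, mul_sum]
        refine sum_congr rfl fun j _ => ?_
        have hvj : ∑ i, A j i * v i = r * v j := congrFun hAv j
        rw [hvj]
        field_simp [(hv j).ne']

theorem norm_toEuclideanCLM_eq_abs_of_pos_eigenvector [DecidableEq ι] [Nonempty ι]
    (hA : ∀ i j, 0 ≤ A i j) (hsymm : A.IsSymm) (hv : ∀ i, 0 < v i) (hAv : A *ᵥ v = r • v) :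
    ‖toEuclideanCLM (𝕜 := ℝ) A‖ = |r| := by
  apply le_antisymm
  · refine ContinuousLinearMap.opNorm_le_bound _ (abs_nonneg r) fun x => ?_
    rw [← pow_le_pow_iff_left₀ (norm_nonneg _) (by positivity) two_ne_zero, mul_pow, sq_abs,
      EuclideanSpace.real_norm_sq_eq, EuclideanSpace.real_norm_sq_eq]
    exact sum_sq_mulVec_le_of_pos_eigenvector hA hsymm hv hAv x
  · have hle := (toEuclideanCLM (𝕜 := ℝ) A).le_opNorm (WithLp.toLp 2 v)
    rw [toEuclideanCLM_toLp, hAv, WithLp.toLp_smul, norm_smul, Real.norm_eq_abs] at hle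
    refine le_of_mul_le_mul_right hle (norm_pos_iff.2 fun h0 => ?_)
    obtain ⟨i⟩ := ‹Nonempty ι›
    have : v i = 0 := by simpa using congrArg (fun y => y i) h0
    exact (hv i).ne' this

theorem of_ite_subtype_mulVec_apply {α S : Type*} [Fintype α] [NonAssocSemiring S]
    {p : α → Prop} [Fintype (Subtype p)] (R : α → α → Prop) [DecidableRel R] {f : α → S}
    (hf : ∀ w, f w ≠ 0 → p w) (z : Subtype p) :
    ((of fun z w : Subtype p => if R z.1 w.1 then (1 : S) else 0) *ᵥ fun w => f w.1) z =
      ∑ w with R z.1 w, f w := by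
  classical
  simp only [mulVec, dotProduct, of_apply, ite_mul, one_mul, zero_mul]
  rw [← sum_subtype (univ.filter p) (by simp) (fun w => if R z.1 w then f w else 0),
    sum_filter_of_ne fun w _ hw => hf w (ite_ne_right_iff.1 hw).2, sum_filter]

end Matrix

section Hamming

variable {ι : Type*} [Fintype ι] [DecidableEq ι]

theorem exists_hammingNorm_eq {β : Type*} [Zero β] [Nontrivial β] [DecidableEq β] {m : ℕ}
    (hm : m ≤ Fintype.card ι) : ∃ z : ι → β, hammingNorm z = m := by
  obtain ⟨a, ha⟩ := exists_ne (0 : β)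
  obtain ⟨s, -, hs⟩ := exists_subset_card_eq (s := univ) (by simpa using hm)
  refine ⟨fun i => if i ∈ s then a else 0, ?_⟩
  unfold hammingNorm
  rw [← hs]
  congr 1
  ext i
  by_cases hi : i ∈ s <;> simp [hi, ha]

theorem hammingDist_eq_one_iff {z w : ι → ZMod 2} :
    hammingDist z w = 1 ↔ ∃ i, w = z + Pi.single i 1 := by
  have hflip : ∀ a b : ZMod 2, a ≠ b ↔ b = a + 1 := by decide
  rw [hammingDist, card_eq_one]
  refine exists_congr fun i => ?_
  rw [Finset.ext_iff, funext_iff]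
  refine forall_congr' fun j => ?_
  rcases eq_or_ne j i with rfl | hji
  · simp [hflip]
  · simp [hji, eq_comm]

theorem hammingNorm_add_single_of_eq_zero {z : ι → ZMod 2} {i : ι} (hi : z i = 0) :
    hammingNorm (z + Pi.single i 1) = hammingNorm z + 1 := by
  have hsupp : univ.filter (fun j => (z + Pi.single i 1 : ι → ZMod 2) j ≠ 0) =
      insert i (univ.filter fun j => z j ≠ 0) := by
    ext j
    rcases eq_or_ne j i with rfl | hji
    · simp [hi]
    · simp [hji]
  unfold hammingNorm
  rw [hsupp, card_insert_of_notMem (by simp [hi])]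

theorem hammingNorm_add_single_of_ne_zero {z : ι → ZMod 2} {i : ι} (hi : z i ≠ 0) :
    hammingNorm (z + Pi.single i 1) + 1 = hammingNorm z := by
  have hflip : ∀ a : ZMod 2, a ≠ 0 → a + 1 = 0 := by decide
  have hsupp : univ.filter (fun j => (z + Pi.single i 1 : ι → ZMod 2) j ≠ 0) =
      (univ.filter fun j => z j ≠ 0).erase i := by
    ext j
    rcases eq_or_ne j i with rfl | hji
    · simp [hflip _ hi]
    · simp [hji]
  unfold hammingNorm
  rw [hsupp, card_erase_add_one (by simpa using hi)]

theorem sum_hammingDist_eq_one {M : Type*} [AddCommMonoid M] (z : ι → ZMod 2) (f : ℕ → M) :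
    ∑ w with hammingDist z w = 1, f (hammingNorm w) =
      hammingNorm z • f (hammingNorm z - 1) +
        (Fintype.card ι - hammingNorm z) • f (hammingNorm z + 1) := by
  have hnbrs : ({w | hammingDist z w = 1} : Finset (ι → ZMod 2)) =
      univ.image fun i => z + Pi.single i 1 := by
    ext w
    simp only [mem_filter, mem_univ, true_and, mem_image, hammingDist_eq_one_iff]
    exact exists_congr fun i => eq_comm
  have hinj : Function.Injective fun i : ι => z + Pi.single i 1 := fun i j hij => by
    by_contra hne
    simpa [hne] using congrFun (add_left_cancel hij) i
  have hcard : #{i | z i ≠ 0} + #{i | ¬z i ≠ 0} = Fintype.card ι :=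
    card_filter_add_card_filter_not _
  rw [hnbrs, sum_image fun i _ j _ hij => hinj hij,
    ← sum_filter_add_sum_filter_not univ fun i => z i ≠ 0]
  congr 1
  · rw [sum_congr rfl fun i hi => ?_, sum_const]
    · rfl
    · rw [← hammingNorm_add_single_of_ne_zero (mem_filter.1 hi).2, Nat.add_sub_cancel]
  · rw [sum_congr rfl fun i hi =>
      by rw [hammingNorm_add_single_of_eq_zero (not_not.1 (mem_filter.1 hi).2)], sum_const,
      ← hcard, show hammingNorm z = #{i | z i ≠ 0} from rfl, Nat.add_sub_cancel_left]

end Hamming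

def threeLayerProfile (n k : ℕ) (r : ℝ) (m : ℕ) : ℝ :=
  if m = k - 1 then n - k + 1 else if m = k then r else if m = k + 1 then k + 1 else 0

section threeLayerProfile

variable {n k m : ℕ} {r : ℝ}

theorem threeLayerProfile_sub_one : threeLayerProfile n k r (k - 1) = n - k + 1 :=
  if_pos rfl

theorem threeLayerProfile_self (hk : 0 < k) : threeLayerProfile n k r k = r := by
  simp [threeLayerProfile, show k ≠ k - 1 by omega]

theorem threeLayerProfile_add_one : threeLayerProfile n k r (k + 1) = k + 1 := by
  simp [threeLayerProfile, show k + 1 ≠ k - 1 by omega]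

theorem threeLayerProfile_eq_zero (hm : ¬(m = k - 1 ∨ m = k ∨ m = k + 1)) :
    threeLayerProfile n k r m = 0 := by
  rw [not_or, not_or] at hm
  simp [threeLayerProfile, hm.1, hm.2.1, hm.2.2]

theorem threeLayerProfile_pos (hk : 0 < k) (hkn : k ≤ n) (hr : 0 < r)
    (hm : m = k - 1 ∨ m = k ∨ m = k + 1) : 0 < threeLayerProfile n k r m := by
  have hk_le : (k : ℝ) ≤ n := by exact_mod_cast hkn
  rcases hm with rfl | rfl | rfl
  · rw [threeLayerProfile_sub_one]
    linarith
  · rwa [threeLayerProfile_self hk]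
  · rw [threeLayerProfile_add_one]
    positivity

theorem threeLayerProfile_eigen (hk : 0 < k) (hkn : k ≤ n) (hr : r ^ 2 = 2 * k * (n - k) + n)
    (hm : m = k - 1 ∨ m = k ∨ m = k + 1) :
    m • threeLayerProfile n k r (m - 1) + (n - m) • threeLayerProfile n k r (m + 1) =
      r * threeLayerProfile n k r m := by
  rcases hm with rfl | rfl | rfl
  · have hdown : (k - 1) • threeLayerProfile n k r (k - 1 - 1) = 0 := by
      rcases Nat.lt_or_ge k 2 with hk2 | hk2
      · rw [show k - 1 = 0 by omega, zero_smul]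
      · rw [threeLayerProfile_eq_zero (by omega), smul_zero]
    rw [hdown, Nat.sub_add_cancel hk, threeLayerProfile_self hk, threeLayerProfile_sub_one,
      nsmul_eq_mul, show n - (k - 1) = n - k + 1 by omega]
    push_cast [Nat.cast_sub hkn]
    ring
  · rw [threeLayerProfile_sub_one, threeLayerProfile_add_one, threeLayerProfile_self hk,
      nsmul_eq_mul, nsmul_eq_mul, Nat.cast_sub hkn]
    linear_combination -hr
  · rw [Nat.add_sub_cancel, threeLayerProfile_self hk, threeLayerProfile_add_one,
      threeLayerProfile_eq_zero (by omega), smul_zero, add_zero, nsmul_eq_mul]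
    push_cast
    ring

end threeLayerProfile

/-- the spectral radius of the subgraph of the hypercube `Q_n` induced by the
vertices of Hamming weight `k-1`, `k`, `k+1` equals `√(2k(n-k)+n)`. -/
theorem specNorm_hypercube_three_layers
    (n k : ℕ) (hk : 0 < k) (hkn : 2 * k < n)
    (M : Matrix {z : Fin n → ZMod 2 //
        hammingNorm z = k - 1 ∨ hammingNorm z = k ∨ hammingNorm z = k + 1}
      {z : Fin n → ZMod 2 //
        hammingNorm z = k - 1 ∨ hammingNorm z = k ∨ hammingNorm z = k + 1} ℝ)
    (hM : M = Matrix.of fun z w => if hammingDist z.1 w.1 = 1 then (1 : ℝ) else 0) :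
    specNorm M = Real.sqrt (2 * (k : ℝ) * ((n : ℝ) - k) + n) := by
  subst hM
  set r := Real.sqrt (2 * (k : ℝ) * ((n : ℝ) - k) + n)
  have hk_le : k ≤ n := by omega
  have hr_sq_pos : 0 < 2 * (k : ℝ) * ((n : ℝ) - k) + n := by
    have : (k : ℝ) < n := by exact_mod_cast (by omega : k < n)
    nlinarith
  have hr : 0 < r := Real.sqrt_pos.2 hr_sq_pos
  obtain ⟨z₀, hz₀⟩ := exists_hammingNorm_eq (ι := Fin n) (β := ZMod 2) (by simpa using hk_le)
  have : Nonempty {z : Fin n → ZMod 2 //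
      hammingNorm z = k - 1 ∨ hammingNorm z = k ∨ hammingNorm z = k + 1} :=
    ⟨⟨z₀, Or.inr (Or.inl hz₀)⟩⟩
  rw [specNorm, norm_toEuclideanCLM_eq_abs_of_pos_eigenvector
    (v := fun z => threeLayerProfile n k r (hammingNorm z.1)), abs_of_pos hr]
  · intro z w
    simp only [of_apply]
    split_ifs <;> norm_num
  · exact IsSymm.ext fun z w => by simp only [of_apply, hammingDist_comm]
  · exact fun z => threeLayerProfile_pos hk hk_le hr z.2
  · ext z
    rw [of_ite_subtype_mulVec_apply (fun z w => hammingDist z w = 1)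
        (f := fun w => threeLayerProfile n k r (hammingNorm w))
        (fun w => not_imp_comm.1 threeLayerProfile_eq_zero),
      sum_hammingDist_eq_one, Fintype.card_fin,
      threeLayerProfile_eigen hk hk_le (Real.sq_sqrt hr_sq_pos.le) z.2]
    rfl
end
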